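/- Under Assumption A1 and the null hypothesis H0, the empirical variance of the squared errors satisfies γ_n(0) := n^{−1} Σ_{t=1}^n (u_t² − E(u_t²))² = (E(ε⁴) − 1) ∫₀¹ g⁴(r) dr + o_p(1) as n → ∞. -/

import Mathlib

open MeasureTheory ProbabilityTheory Filter Finset Set Topology

noncomputable section

/-- A function is piecewise Lipschitz on `(0,1]`: there are finitely many mutually disjoint
intervals covering `(0,1]` on each of which the function is Lipschitz. -/
def PiecewiseLipschitzOn01 (g : ℝ → ℝ) : Prop :=
  ∃ (q : ℕ) (I : Fin q → Set ℝ) (C : Fin q → NNReal),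
    (∀ l, (I l).OrdConnected) ∧ Pairwise (Function.onFun Disjoint I) ∧
      (⋃ l, I l) = Set.Ioc (0 : ℝ) 1 ∧ ∀ l, LipschitzOnWith (C l) g (I l)

/-- Convergence in distribution (weak convergence of the laws of `X n` under `μ` to `ν`). -/
def TendstoInDistribution {Ω E : Type*} [MeasurableSpace Ω] [MeasurableSpace E]
    [TopologicalSpace E] (X : ℕ → Ω → E) (μ : Measure Ω) (ν : Measure E) : Prop :=
  ∀ f : BoundedContinuousFunction E ℝ,
    Tendsto (fun n => ∫ ω, f (X n ω) ∂μ) atTop (𝓝 (∫ x, f x ∂ν))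

/-- `X n = o_p(1)` : convergence to zero in probability. -/
def TendstoZeroInProb {Ω : Type*} [MeasurableSpace Ω] (μ : Measure Ω) (X : ℕ → Ω → ℝ) : Prop :=
  ∀ δ : ℝ, 0 < δ → Tendsto (fun n => (μ {ω | δ ≤ |X n ω|}).toReal) atTop (𝓝 0)

/-- An i.i.d. sequence of real random variables (indexed by `ι`, with reference index `t0`). -/
def IsIIDSeq {Ω : Type*} [MeasurableSpace Ω] (μ : Measure Ω) {ι : Type*}
    (ε : ι → Ω → ℝ) (t0 : ι) : Prop :=
  (∀ t, Measurable (ε t)) ∧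
    iIndepFun ε μ ∧
    ∀ t, IdentDistrib (ε t) (ε t0) μ μ

/-- The chi-square law with `m` degrees of freedom, as a Gamma(m/2, 1/2) law. -/
def chiSqMeasure (m : ℕ) : Measure ℝ := gammaMeasure ((m : ℝ) / 2) (1 / 2)

/-- `ν` is a centered Gaussian law on `Fin m → ℝ` with covariance matrix `S`
(characterized through one-dimensional projections). -/
def IsCenteredGaussianWithCov {m : ℕ} (ν : Measure (Fin m → ℝ))
    (S : Matrix (Fin m) (Fin m) ℝ) : Prop :=
  IsProbabilityMeasure ν ∧ ∀ a : Fin m → ℝ,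
    ν.map (fun z => ∑ i, a i * z i) =
      gaussianReal 0 (Real.toNNReal (∑ i, ∑ j, a i * S i j * a j))

/-- The matrix `Σ = (v/4) M`, `M` having diagonal entries `a` and off-diagonal entries 1. -/
def sigmaMat (m : ℕ) (v a : ℝ) : Matrix (Fin m) (Fin m) ℝ :=
  Matrix.of fun i j => (v / 4) * (if i = j then a else 1)

/-- The time-varying volatility `h_t = g(t/n)`. -/
def hvol (g : ℝ → ℝ) (n : ℕ) (t : ℤ) : ℝ := g ((t : ℝ) / (n : ℝ))

/-- The autoregression residual `u_t(θ)`, with the convention `u_t(θ) = 0` for `t ≤ 0`. -/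
def resid {Ω : Type*} (x : ℕ → ℤ → Ω → ℝ) {p : ℕ} (θ : Fin p → ℝ) (n : ℕ) (t : ℤ)
    (ω : Ω) : ℝ :=
  if 1 ≤ t then x n t ω - ∑ i : Fin p, θ i * x n (t - ((i : ℤ) + 1)) ω else 0

/-- The design matrix of the GLS estimator. -/
def glsMat {Ω : Type*} (x : ℕ → ℤ → Ω → ℝ) (g : ℝ → ℝ) (p n : ℕ) (ω : Ω) :
    Matrix (Fin p) (Fin p) ℝ :=
  Matrix.of fun i j => ∑ t ∈ Finset.Icc (1 : ℤ) (n : ℤ),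
    ((hvol g n t) ^ 2)⁻¹ * (x n (t - 1 - (i : ℤ)) ω * x n (t - 1 - (j : ℤ)) ω)

def glsVec {Ω : Type*} (x : ℕ → ℤ → Ω → ℝ) (g : ℝ → ℝ) (p n : ℕ) (ω : Ω) : Fin p → ℝ :=
  fun i => ∑ t ∈ Finset.Icc (1 : ℤ) (n : ℤ),
    ((hvol g n t) ^ 2)⁻¹ * (x n t ω * x n (t - 1 - (i : ℤ)) ω)

/-- The GLS estimator `θ̂`. -/
def glsEst {Ω : Type*} (x : ℕ → ℤ → Ω → ℝ) (g : ℝ → ℝ) (p n : ℕ) (ω : Ω) : Fin p → ℝ :=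
  Matrix.mulVec (glsMat x g p n ω)⁻¹ (glsVec x g p n ω)

/-- The design matrix of the OLS estimator. -/
def olsMat {Ω : Type*} (x : ℕ → ℤ → Ω → ℝ) (p n : ℕ) (ω : Ω) : Matrix (Fin p) (Fin p) ℝ :=
  Matrix.of fun i j => ∑ t ∈ Finset.Icc (1 : ℤ) (n : ℤ),
    x n (t - 1 - (i : ℤ)) ω * x n (t - 1 - (j : ℤ)) ω

def olsVec {Ω : Type*} (x : ℕ → ℤ → Ω → ℝ) (p n : ℕ) (ω : Ω) : Fin p → ℝ :=
  fun i => ∑ t ∈ Finset.Icc (1 : ℤ) (n : ℤ), x n t ω * x n (t - 1 - (i : ℤ)) ω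

/-- The OLS estimator `θ̌`. -/
def olsEst {Ω : Type*} (x : ℕ → ℤ → Ω → ℝ) (p n : ℕ) (ω : Ω) : Fin p → ℝ :=
  Matrix.mulVec (olsMat x p n ω)⁻¹ (olsVec x p n ω)

/-- The normalized score vector `S(θ)` (built with the true volatility `h_t`). -/
def glsScore {Ω : Type*} (x : ℕ → ℤ → Ω → ℝ) (g : ℝ → ℝ) (p m n : ℕ) (θ : Fin p → ℝ)
    (ω : Ω) : Fin m → ℝ :=
  fun j => (1 / (2 * Real.sqrt (n : ℝ))) * ∑ t ∈ Finset.Icc (1 : ℤ) (n : ℤ),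
    ((resid x θ n t ω ^ 2 / hvol g n t ^ 2 - 1) *
      (resid x θ n (t - ((j : ℤ) + 1)) ω ^ 2 / hvol g n t ^ 2))

/-- `n⁻¹ Σ u_t(θ̂)⁴ h_t⁻⁴`, the estimator of `E ε⁴`. -/
def glsE4 {Ω : Type*} (x : ℕ → ℤ → Ω → ℝ) (g : ℝ → ℝ) (p n : ℕ) (ω : Ω) : ℝ :=
  (n : ℝ)⁻¹ * ∑ t ∈ Finset.Icc (1 : ℤ) (n : ℤ),
    resid x (glsEst x g p n ω) n t ω ^ 4 / hvol g n t ^ 4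

def glsE2 {Ω : Type*} (x : ℕ → ℤ → Ω → ℝ) (g : ℝ → ℝ) (p n : ℕ) (ω : Ω) : ℝ :=
  (n : ℝ)⁻¹ * ∑ t ∈ Finset.Icc (1 : ℤ) (n : ℤ),
    resid x (glsEst x g p n ω) n t ω ^ 2 / hvol g n t ^ 2

def glsE8 {Ω : Type*} (x : ℕ → ℤ → Ω → ℝ) (g : ℝ → ℝ) (p n : ℕ) (ω : Ω) : ℝ :=
  (n : ℝ)⁻¹ * ∑ t ∈ Finset.Icc (1 : ℤ) (n : ℤ),
    resid x (glsEst x g p n ω) n t ω ^ 8 / hvol g n t ^ 8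

/-- The estimated weight matrix `Σ̂` of the (infeasible) GLS ARCH-LM statistic. -/
def glsSigma {Ω : Type*} (x : ℕ → ℤ → Ω → ℝ) (g : ℝ → ℝ) (p m n : ℕ) (ω : Ω) :
    Matrix (Fin m) (Fin m) ℝ :=
  sigmaMat m (glsE4 x g p n ω - (glsE2 x g p n ω) ^ 2) (glsE4 x g p n ω)

/-- The (infeasible) GLS ARCH-LM statistic `Q_GLS`. -/
def QGLS {Ω : Type*} (x : ℕ → ℤ → Ω → ℝ) (g : ℝ → ℝ) (p m n : ℕ) (ω : Ω) : ℝ :=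
  dotProduct (glsScore x g p m n (glsEst x g p n ω) ω)
    (Matrix.mulVec (glsSigma x g p m n ω)⁻¹ (glsScore x g p m n (glsEst x g p n ω) ω))

/-- The (infeasible) empirical autocovariance `γ̂(j)` of the squared GLS residuals. -/
def glsGamma {Ω : Type*} (x : ℕ → ℤ → Ω → ℝ) (g : ℝ → ℝ) (p n j : ℕ) (ω : Ω) : ℝ :=
  (n : ℝ)⁻¹ * ∑ t ∈ Finset.Icc ((j : ℤ) + 1) (n : ℤ),
    (resid x (glsEst x g p n ω) n t ω ^ 2 - hvol g n t ^ 2) *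
      (resid x (glsEst x g p n ω) n (t - (j : ℤ)) ω ^ 2 - hvol g n (t - (j : ℤ)) ^ 2)

def glsOmega4 {Ω : Type*} (x : ℕ → ℤ → Ω → ℝ) (g : ℝ → ℝ) (p n : ℕ) (ω : Ω) : ℝ :=
  ((n : ℝ)⁻¹ * ∑ t ∈ Finset.Icc (1 : ℤ) (n : ℤ), resid x (glsEst x g p n ω) n t ω ^ 4) /
    glsE4 x g p n ω

def glsOmega8 {Ω : Type*} (x : ℕ → ℤ → Ω → ℝ) (g : ℝ → ℝ) (p n : ℕ) (ω : Ω) : ℝ :=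
  ((n : ℝ)⁻¹ * ∑ t ∈ Finset.Icc (1 : ℤ) (n : ℤ), resid x (glsEst x g p n ω) n t ω ^ 8) /
    glsE8 x g p n ω

/-- The (infeasible) GLS Ljung–Box type portmanteau statistic `Q*_GLS`. -/
def QstarGLS {Ω : Type*} (x : ℕ → ℤ → Ω → ℝ) (g : ℝ → ℝ) (p m n : ℕ) (ω : Ω) : ℝ :=
  ((n : ℝ) * ((n : ℝ) + 2) * ∑ i ∈ Finset.Icc 1 m,
      (glsGamma x g p n i ω / glsGamma x g p n 0 ω) ^ 2 / ((n : ℝ) - (i : ℝ))) *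
    (glsOmega4 x g p n ω ^ 2 / glsOmega8 x g p n ω)

/-- Kernel weights entries `K_{ti}` (with `K_{tt} = 0`). -/
def kerEntry (K : ℝ → ℝ) (n : ℕ) (b : ℝ) (t i : ℤ) : ℝ :=
  if t = i then 0 else K (((t : ℝ) - (i : ℝ)) / ((n : ℝ) * b))

/-- Kernel weights `w_{ti}`. -/
def kerWeight (K : ℝ → ℝ) (n : ℕ) (b : ℝ) (t i : ℤ) : ℝ :=
  kerEntry K n b t i / ∑ j ∈ Finset.Icc (1 : ℤ) (n : ℤ), kerEntry K n b t j

/-- The kernel estimator `ĥ_t²` of the variance, built from the squared OLS residuals. -/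
def hhatSq {Ω : Type*} (x : ℕ → ℤ → Ω → ℝ) (K : ℝ → ℝ) (p n : ℕ) (b : ℝ) (t : ℤ)
    (ω : Ω) : ℝ :=
  ∑ i ∈ Finset.Icc (1 : ℤ) (n : ℤ), kerWeight K n b t i * resid x (olsEst x p n ω) n i ω ^ 2

/-- The design matrix of the adaptive (ALS) estimator. -/
def alsMat {Ω : Type*} (x : ℕ → ℤ → Ω → ℝ) (K : ℝ → ℝ) (p n : ℕ) (b : ℝ) (ω : Ω) :
    Matrix (Fin p) (Fin p) ℝ :=
  Matrix.of fun i j => ∑ t ∈ Finset.Icc (1 : ℤ) (n : ℤ),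
    (hhatSq x K p n b t ω)⁻¹ * (x n (t - 1 - (i : ℤ)) ω * x n (t - 1 - (j : ℤ)) ω)

def alsVec {Ω : Type*} (x : ℕ → ℤ → Ω → ℝ) (K : ℝ → ℝ) (p n : ℕ) (b : ℝ) (ω : Ω) :
    Fin p → ℝ :=
  fun i => ∑ t ∈ Finset.Icc (1 : ℤ) (n : ℤ),
    (hhatSq x K p n b t ω)⁻¹ * (x n t ω * x n (t - 1 - (i : ℤ)) ω)

/-- The adaptive estimator `θ̃`. -/
def alsEst {Ω : Type*} (x : ℕ → ℤ → Ω → ℝ) (K : ℝ → ℝ) (p n : ℕ) (b : ℝ) (ω : Ω) :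
    Fin p → ℝ :=
  Matrix.mulVec (alsMat x K p n b ω)⁻¹ (alsVec x K p n b ω)

/-- The approximated (adaptive) score vector `S̃(θ̃)`. -/
def alsScore {Ω : Type*} (x : ℕ → ℤ → Ω → ℝ) (K : ℝ → ℝ) (p m n : ℕ) (b : ℝ) (ω : Ω) :
    Fin m → ℝ :=
  fun j => (1 / (2 * Real.sqrt (n : ℝ))) * ∑ t ∈ Finset.Icc (1 : ℤ) (n : ℤ),
    ((resid x (alsEst x K p n b ω) n t ω ^ 2 / hhatSq x K p n b t ω - 1) *
      (resid x (alsEst x K p n b ω) n (t - ((j : ℤ) + 1)) ω ^ 2 / hhatSq x K p n b t ω))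

def alsE4 {Ω : Type*} (x : ℕ → ℤ → Ω → ℝ) (K : ℝ → ℝ) (p n : ℕ) (b : ℝ) (ω : Ω) : ℝ :=
  (n : ℝ)⁻¹ * ∑ t ∈ Finset.Icc (1 : ℤ) (n : ℤ),
    resid x (alsEst x K p n b ω) n t ω ^ 4 / (hhatSq x K p n b t ω) ^ 2

def alsE2 {Ω : Type*} (x : ℕ → ℤ → Ω → ℝ) (K : ℝ → ℝ) (p n : ℕ) (b : ℝ) (ω : Ω) : ℝ :=
  (n : ℝ)⁻¹ * ∑ t ∈ Finset.Icc (1 : ℤ) (n : ℤ),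
    resid x (alsEst x K p n b ω) n t ω ^ 2 / hhatSq x K p n b t ω

def alsE8 {Ω : Type*} (x : ℕ → ℤ → Ω → ℝ) (K : ℝ → ℝ) (p n : ℕ) (b : ℝ) (ω : Ω) : ℝ :=
  (n : ℝ)⁻¹ * ∑ t ∈ Finset.Icc (1 : ℤ) (n : ℤ),
    resid x (alsEst x K p n b ω) n t ω ^ 8 / (hhatSq x K p n b t ω) ^ 4

/-- The estimated weight matrix `Σ̃` of the adaptive ARCH-LM statistic. -/
def alsSigma {Ω : Type*} (x : ℕ → ℤ → Ω → ℝ) (K : ℝ → ℝ) (p m n : ℕ) (b : ℝ) (ω : Ω) :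
    Matrix (Fin m) (Fin m) ℝ :=
  sigmaMat m (alsE4 x K p n b ω - (alsE2 x K p n b ω) ^ 2) (alsE4 x K p n b ω)

/-- The adaptive ARCH-LM statistic `Q_ALS`. -/
def QALS {Ω : Type*} (x : ℕ → ℤ → Ω → ℝ) (K : ℝ → ℝ) (p m n : ℕ) (b : ℝ) (ω : Ω) : ℝ :=
  dotProduct (alsScore x K p m n b ω)
    (Matrix.mulVec (alsSigma x K p m n b ω)⁻¹ (alsScore x K p m n b ω))

/-- The adaptive empirical autocovariance `γ̃(j)` of the squared residuals. -/
def alsGamma {Ω : Type*} (x : ℕ → ℤ → Ω → ℝ) (K : ℝ → ℝ) (p n j : ℕ) (b : ℝ) (ω : Ω) : ℝ :=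
  (n : ℝ)⁻¹ * ∑ t ∈ Finset.Icc ((j : ℤ) + 1) (n : ℤ),
    (resid x (alsEst x K p n b ω) n t ω ^ 2 - hhatSq x K p n b t ω) *
      (resid x (alsEst x K p n b ω) n (t - (j : ℤ)) ω ^ 2 - hhatSq x K p n b (t - (j : ℤ)) ω)

def alsOmega4 {Ω : Type*} (x : ℕ → ℤ → Ω → ℝ) (K : ℝ → ℝ) (p n : ℕ) (b : ℝ) (ω : Ω) : ℝ :=
  ((n : ℝ)⁻¹ * ∑ t ∈ Finset.Icc (1 : ℤ) (n : ℤ), resid x (alsEst x K p n b ω) n t ω ^ 4) /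
    alsE4 x K p n b ω

def alsOmega8 {Ω : Type*} (x : ℕ → ℤ → Ω → ℝ) (K : ℝ → ℝ) (p n : ℕ) (b : ℝ) (ω : Ω) : ℝ :=
  ((n : ℝ)⁻¹ * ∑ t ∈ Finset.Icc (1 : ℤ) (n : ℤ), resid x (alsEst x K p n b ω) n t ω ^ 8) /
    alsE8 x K p n b ω

/-- The adaptive portmanteau statistic `Q*_ALS`. -/
def QstarALS {Ω : Type*} (x : ℕ → ℤ → Ω → ℝ) (K : ℝ → ℝ) (p m n : ℕ) (b : ℝ) (ω : Ω) : ℝ :=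
  ((n : ℝ) * ((n : ℝ) + 2) * ∑ i ∈ Finset.Icc 1 m,
      (alsGamma x K p n i b ω / alsGamma x K p n 0 b ω) ^ 2 / ((n : ℝ) - (i : ℝ))) *
    (alsOmega4 x K p n b ω ^ 2 / alsOmega8 x K p n b ω)

/-- The squared ARCH(1)-type error process started in the infinite past,
`u_t² = Σ_{i≥0} α^i h_{t-i}² ε_{t-i}² ⋯ ε_t²`, with `h_l = c0` for `l ≤ 0`. -/
def usqARCH {Ω : Type*} (g : ℝ → ℝ) (c0 α : ℝ) (ε : ℤ → Ω → ℝ) (n : ℕ) (t : ℤ) (ω : Ω) : ℝ :=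
  ∑' i : ℕ, α ^ i * (if 1 ≤ t - (i : ℤ) then g (((t : ℝ) - (i : ℝ)) / (n : ℝ)) else c0) ^ 2 *
    ∏ k ∈ Finset.range (i + 1), (ε (t - (k : ℤ)) ω) ^ 2

/-- Assumption A2(i) on the kernel `K`. -/
def KernelAssumption (K : ℝ → ℝ) : Prop :=
  Measurable K ∧ (∀ v, 0 ≤ K v) ∧ (∃ CK : ℝ, ∀ v, K v ≤ CK) ∧ (∫ v, K v = 1) ∧
    MonotoneOn K (Set.Iic 0) ∧ AntitoneOn K (Set.Ici 0) ∧
    Integrable (fun v => v ^ 2 * K v) ∧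
    (∃ (S : Finset ℝ) (K' : ℝ → ℝ), (∀ v ∉ S, HasDerivAt K (K' v) v) ∧
      Integrable (fun v => |v * K' v|)) ∧
    (∃ τ : ℝ, 0 < τ ∧
      Integrable (fun s => |s| ^ τ * ‖VectorFourier.fourierIntegral Real.fourierChar volume (innerₗ ℝ) (fun v => (K v : ℂ)) s‖))

/-!
With `c = E ε⁴ - 1` and `ψ x = (x² - 1)² - c`, each summand splits as
`((h_t ε_t)² - h_t²)² = h_t⁴ ψ(ε_t) + c h_t⁴`. The variables `ψ(ε_t)` are i.i.d., centred, and
square integrable because `E ε⁸ < ∞`, so their average with the bounded weights `h_t⁴` has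
variance `O(1/n)` and vanishes in probability by Chebyshev's inequality. The remaining term is
`c` times a Riemann sum of `g⁴`, which converges to `∫₀¹ g⁴`: `g` is bounded and, being
piecewise Lipschitz, right-continuous at all but finitely many points, so dominated convergence
applies to the step functions of the Riemann sums.
-/

section Probability

variable {Ω : Type*} [MeasurableSpace Ω] {μ : Measure Ω}

lemma integrable_pow_of_integrable_abs_rpow [IsFiniteMeasure μ] {X : Ω → ℝ}
    (hX : AEStronglyMeasurable X μ) {s : ℝ} (hs : Integrable (fun ω => |X ω| ^ s) μ) {k : ℕ}
    (hk : (k : ℝ) ≤ s) : Integrable (fun ω => X ω ^ k) μ := by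
  have hk' : Integrable (fun ω => ‖X ω‖ ^ (k : ℝ)) μ :=
    integrable_norm_rpow_of_le hX k.cast_nonneg ((Nat.cast_nonneg k).trans hk) hk hs
  refine (integrable_norm_iff (hX.pow k)).1 ?_
  simpa only [Pi.pow_apply, norm_pow, Real.rpow_natCast] using hk'

lemma memLp_sq_sub_one_sq [IsFiniteMeasure μ] {X : Ω → ℝ} (hX : AEStronglyMeasurable X μ)
    {s : ℝ} (hs8 : 8 ≤ s) (hs : Integrable (fun ω => |X ω| ^ s) μ) :
    MemLp (fun ω => (X ω ^ 2 - 1) ^ 2) 2 μ := by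
  have hL2 : ∀ k : ℕ, 2 * k ≤ 8 → MemLp (fun ω => X ω ^ k) 2 μ := fun k hk =>
    (memLp_two_iff_integrable_sq (hX.pow k)).2 <| by
      simpa only [Pi.pow_apply, ← pow_mul] using
        integrable_pow_of_integrable_abs_rpow hX hs (k := k * 2) (by
          have : ((k * 2 : ℕ) : ℝ) ≤ 8 := by exact_mod_cast (by omega : k * 2 ≤ 8)
          linarith)
  have h : (fun ω => (X ω ^ 2 - 1) ^ 2) = fun ω => X ω ^ 4 - 2 * X ω ^ 2 + 1 := by
    funext ω; ring
  rw [h]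
  exact ((hL2 4 (by norm_num)).sub ((hL2 2 (by norm_num)).const_mul 2)).add (memLp_const 1)

lemma integral_sq_sub_one_sq [IsProbabilityMeasure μ] {X : Ω → ℝ}
    (h2 : Integrable (fun ω => X ω ^ 2) μ) (h4 : Integrable (fun ω => X ω ^ 4) μ)
    (hvar : ∫ ω, X ω ^ 2 ∂μ = 1) :
    ∫ ω, (X ω ^ 2 - 1) ^ 2 ∂μ = (∫ ω, X ω ^ 4 ∂μ) - 1 := by
  have h : (fun ω => (X ω ^ 2 - 1) ^ 2) = fun ω => X ω ^ 4 - 2 * X ω ^ 2 + 1 := by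
    funext ω; ring
  rw [h, integral_add (f := fun ω => X ω ^ 4 - 2 * X ω ^ 2) (h4.sub (h2.const_mul 2))
      (integrable_const 1),
    integral_sub h4 (h2.const_mul 2), integral_const_mul, hvar]
  simp only [integral_const, probReal_univ, one_smul]
  ring

lemma TendstoZeroInProb.of_variance [IsFiniteMeasure μ] {Z : ℕ → Ω → ℝ}
    (hL2 : ∀ n, MemLp (Z n) 2 μ) (hmean : ∀ n, μ[Z n] = 0)
    (hvar : Tendsto (fun n => variance (Z n) μ) atTop (𝓝 0)) : TendstoZeroInProb μ Z := by
  intro δ hδ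
  refine squeeze_zero (fun n => ENNReal.toReal_nonneg) (fun n => ?_)
    (by simpa using hvar.div_const (δ ^ 2))
  have hcheb := meas_ge_le_variance_div_sq (hL2 n) hδ
  simp only [hmean n, sub_zero] at hcheb
  exact ENNReal.toReal_le_of_le_ofReal (div_nonneg (variance_nonneg _ _) (sq_nonneg δ)) hcheb

lemma TendstoZeroInProb.add_tendsto_zero [IsFiniteMeasure μ] {X : ℕ → Ω → ℝ} {c : ℕ → ℝ}
    (hX : TendstoZeroInProb μ X) (hc : Tendsto c atTop (𝓝 0)) :
    TendstoZeroInProb μ (fun n ω => X n ω + c n) := by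
  intro δ hδ
  have hsmall : ∀ᶠ n in atTop, |c n| < δ / 2 := by
    exact ((tendsto_zero_iff_abs_tendsto_zero c).1 hc).eventually_lt_const (half_pos hδ)
  refine squeeze_zero' (Eventually.of_forall fun n => ENNReal.toReal_nonneg) ?_
    (hX (δ / 2) (half_pos hδ))
  filter_upwards [hsmall] with n hn
  refine ENNReal.toReal_mono (measure_ne_top μ _) (measure_mono fun ω hω => ?_)
  simp only [Set.mem_ofPred_eq] at hω ⊢
  linarith [abs_add_le (X n ω) (c n)]

lemma variance_weighted_average_le [IsFiniteMeasure μ] {Y : ℕ → Ω → ℝ}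
    (hindep : Pairwise fun i j => IndepFun (Y i) (Y j) μ) (hL2 : ∀ t, MemLp (Y t) 2 μ)
    {V : ℝ} (hvar : ∀ t, variance (Y t) μ ≤ V) {n : ℕ} {a : ℕ → ℝ} {A : ℝ}
    (ha : ∀ t ∈ Finset.Icc 1 n, |a t| ≤ A) :
    variance (fun ω => (n : ℝ)⁻¹ * ∑ t ∈ Finset.Icc 1 n, a t * Y t ω) μ ≤ A ^ 2 * V / n := by
  have hsum : (fun ω => ∑ t ∈ Finset.Icc 1 n, a t * Y t ω) =
      ∑ t ∈ Finset.Icc 1 n, (fun ω => a t * Y t ω) := by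
    funext ω; simp only [Finset.sum_apply]
  have hterm : ∀ t ∈ Finset.Icc 1 n, variance (fun ω => a t * Y t ω) μ ≤ A ^ 2 * V := by
    intro t ht
    rw [variance_const_mul]
    have hV : 0 ≤ V := (variance_nonneg _ _).trans (hvar t)
    have hA : a t ^ 2 ≤ A ^ 2 := sq_le_sq' (abs_le.1 (ha t ht)).1 (abs_le.1 (ha t ht)).2
    exact mul_le_mul hA (hvar t) (variance_nonneg _ _) (by positivity)
  rcases Nat.eq_zero_or_pos n with rfl | hn
  · simp only [CharP.cast_eq_zero, inv_zero, zero_mul, div_zero]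
    exact (variance_zero μ).le
  calc variance (fun ω => (n : ℝ)⁻¹ * ∑ t ∈ Finset.Icc 1 n, a t * Y t ω) μ
      = ((n : ℝ)⁻¹) ^ 2 * ∑ t ∈ Finset.Icc 1 n, variance (fun ω => a t * Y t ω) μ := by
        rw [variance_const_mul, hsum, IndepFun.variance_sum (fun t _ => (hL2 t).const_mul _)
          (fun i _ j _ hij => (hindep hij).comp (measurable_const_mul _) (measurable_const_mul _))]
    _ ≤ ((n : ℝ)⁻¹) ^ 2 * (n * (A ^ 2 * V)) := by
        gcongr
        simpa using Finset.sum_le_sum hterm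
    _ = A ^ 2 * V / n := by field_simp

lemma tendstoZeroInProb_weighted_average [IsProbabilityMeasure μ] {Y : ℕ → Ω → ℝ}
    (hindep : Pairwise fun i j => IndepFun (Y i) (Y j) μ) (hL2 : ∀ t, MemLp (Y t) 2 μ)
    (hmean : ∀ t, μ[Y t] = 0) {V : ℝ} (hvar : ∀ t, variance (Y t) μ ≤ V)
    {a : ℕ → ℕ → ℝ} {A : ℝ} (ha : ∀ n, ∀ t ∈ Finset.Icc 1 n, |a n t| ≤ A) :
    TendstoZeroInProb μ (fun n ω => (n : ℝ)⁻¹ * ∑ t ∈ Finset.Icc 1 n, a n t * Y t ω) := by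
  refine TendstoZeroInProb.of_variance (fun n => ?_) (fun n => ?_) ?_
  · exact (memLp_finsetSum _ fun t _ => (hL2 t).const_mul (a n t)).const_mul _
  · rw [integral_const_mul,
      integral_finsetSum _ fun t _ => ((hL2 t).const_mul _).integrable one_le_two]
    simp [integral_const_mul, hmean]
  · refine squeeze_zero (fun n => variance_nonneg _ _)
      (fun n => variance_weighted_average_le hindep hL2 hvar (ha n)) ?_
    simpa using tendsto_const_div_atTop_nhds_zero_nat (A ^ 2 * V)

lemma IsIIDSeq.comp {ι : Type*} {ε : ι → Ω → ℝ} {t₀ : ι} (h : IsIIDSeq μ ε t₀) {φ : ℝ → ℝ}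
    (hφ : Measurable φ) : IsIIDSeq μ (fun t ω => φ (ε t ω)) t₀ :=
  ⟨fun t => hφ.comp (h.1 t), h.2.1.comp (fun _ => φ) fun _ => hφ, fun t => (h.2.2 t).comp hφ⟩

lemma IsIIDSeq.tendstoZeroInProb_weighted_average [IsProbabilityMeasure μ] {Y : ℕ → Ω → ℝ}
    {t₀ : ℕ} (hY : IsIIDSeq μ Y t₀) (hL2 : MemLp (Y t₀) 2 μ) (hmean : μ[Y t₀] = 0)
    {a : ℕ → ℕ → ℝ} {A : ℝ} (ha : ∀ n, ∀ t ∈ Finset.Icc 1 n, |a n t| ≤ A) :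
    TendstoZeroInProb μ (fun n ω => (n : ℝ)⁻¹ * ∑ t ∈ Finset.Icc 1 n, a n t * Y t ω) :=
  _root_.tendstoZeroInProb_weighted_average (fun _ _ hij => hY.2.1.indepFun hij)
    (fun t => (hY.2.2 t).memLp_iff.2 hL2) (fun t => (hY.2.2 t).integral_eq.trans hmean)
    (fun t => (hY.2.2 t).variance_eq.le) ha

end Probability

section RiemannSum

lemma div_mem_Ioc_zero_one {n t : ℕ} (ht : t ∈ Finset.Icc 1 n) :
    (t : ℝ) / n ∈ Set.Ioc (0 : ℝ) 1 := by
  obtain ⟨ht1, htn⟩ := Finset.mem_Icc.1 ht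
  have hn : (0 : ℝ) < n := by exact_mod_cast ht1.trans htn
  exact ⟨by positivity, (div_le_one hn).2 (by exact_mod_cast htn)⟩

lemma ceil_mul_mem_Icc {n : ℕ} (hn : 1 ≤ n) {r : ℝ} (hr : r ∈ Set.Ioc (0 : ℝ) 1) :
    ⌈(n : ℝ) * r⌉₊ ∈ Finset.Icc 1 n := by
  have hn' : (0 : ℝ) < n := by exact_mod_cast hn
  refine Finset.mem_Icc.2 ⟨Nat.ceil_pos.2 (mul_pos hn' hr.1), Nat.ceil_le.2 ?_⟩
  simpa using mul_le_mul_of_nonneg_left hr.2 hn'.le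

lemma ceil_mul_eq_iff_mem_Ioc {n t : ℕ} (hn : 0 < n) (ht : 1 ≤ t) {r : ℝ} :
    ⌈(n : ℝ) * r⌉₊ = t ↔ r ∈ Set.Ioc (((t : ℝ) - 1) / n) ((t : ℝ) / n) := by
  have hn' : (0 : ℝ) < n := by exact_mod_cast hn
  rw [Nat.ceil_eq_iff (by omega), Nat.cast_sub ht, Set.mem_Ioc, div_lt_iff₀ hn', le_div_iff₀ hn',
    Nat.cast_one, mul_comm r]

def riemannStep (f : ℝ → ℝ) (n : ℕ) (r : ℝ) : ℝ :=
  ∑ t ∈ Finset.Icc 1 n,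
    (Set.Ioc (((t : ℝ) - 1) / n) ((t : ℝ) / n)).indicator (fun _ => f (t / n)) r

lemma riemannStep_eq_of_mem_Ioc (f : ℝ → ℝ) {n : ℕ} (hn : 1 ≤ n) {r : ℝ}
    (hr : r ∈ Set.Ioc (0 : ℝ) 1) : riemannStep f n r = f (⌈(n : ℝ) * r⌉₊ / n) := by
  classical
  have hpiece : ∀ t ∈ Finset.Icc 1 n,
      (Set.Ioc (((t : ℝ) - 1) / n) ((t : ℝ) / n)).indicator (fun _ => f (t / n)) r =
        if ⌈(n : ℝ) * r⌉₊ = t then f (t / n) else 0 := fun t ht => by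
    rw [Set.indicator_apply]
    exact if_congr (ceil_mul_eq_iff_mem_Ioc hn (Finset.mem_Icc.1 ht).1).symm rfl rfl
  rw [riemannStep, Finset.sum_congr rfl hpiece, Finset.sum_ite_eq,
    if_pos (ceil_mul_mem_Icc hn hr)]

lemma setIntegral_riemannStep (f : ℝ → ℝ) (n : ℕ) :
    ∫ r in Set.Ioc (0 : ℝ) 1, riemannStep f n r =
      (n : ℝ)⁻¹ * ∑ t ∈ Finset.Icc 1 n, f (t / n) := by
  unfold riemannStep
  rw [integral_finsetSum _ fun t _ => (integrable_const _).indicator measurableSet_Ioc,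
    Finset.mul_sum]
  refine Finset.sum_congr rfl fun t ht => ?_
  obtain ⟨ht1, htn⟩ := Finset.mem_Icc.1 ht
  have hn : (0 : ℝ) < n := by exact_mod_cast ht1.trans htn
  have hsub : Set.Ioc (((t : ℝ) - 1) / n) ((t : ℝ) / n) ⊆ Set.Ioc 0 1 :=
    Set.Ioc_subset_Ioc (div_nonneg (by simpa using ht1) hn.le) (div_mem_Ioc_zero_one ht).2
  rw [setIntegral_indicator measurableSet_Ioc, Set.inter_eq_self_of_subset_right hsub,
    setIntegral_const, measureReal_def, Real.volume_Ioc, smul_eq_mul,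
    ENNReal.toReal_ofReal (by rw [← sub_div, sub_sub_cancel]; positivity)]
  field_simp
  ring

lemma tendsto_ceil_mul_div_nhdsWithin_Ici {r : ℝ} (hr : 0 ≤ r) :
    Tendsto (fun n : ℕ => (⌈(n : ℝ) * r⌉₊ : ℝ) / n) atTop (𝓝[≥] r) := by
  have hbounds : ∀ᶠ n : ℕ in atTop,
      r ≤ (⌈(n : ℝ) * r⌉₊ : ℝ) / n ∧ (⌈(n : ℝ) * r⌉₊ : ℝ) / n ≤ r + (n : ℝ)⁻¹ := by
    filter_upwards [eventually_gt_atTop 0] with n hn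
    have hn' : (0 : ℝ) < n := by exact_mod_cast hn
    refine ⟨(le_div_iff₀ hn').2 ?_, (div_le_iff₀ hn').2 ?_⟩
    · rw [mul_comm]; exact Nat.le_ceil _
    · have := Nat.ceil_lt_add_one (mul_nonneg hn'.le hr)
      rw [add_mul, inv_mul_cancel₀ hn'.ne']
      linarith
  refine tendsto_nhdsWithin_of_tendsto_nhds_of_eventually_within _ ?_
    (hbounds.mono fun n h => h.1)
  refine tendsto_of_tendsto_of_tendsto_of_le_of_le' tendsto_const_nhds ?_
    (hbounds.mono fun n h => h.1) (hbounds.mono fun n h => h.2)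
  simpa using (tendsto_const_nhds (x := r)).add tendsto_inv_atTop_nhds_zero_nat

lemma tendsto_riemannSum {f : ℝ → ℝ} {C : ℝ} (hf : ∀ r ∈ Set.Ioc (0 : ℝ) 1, |f r| ≤ C)
    (hcont : ∀ᵐ r ∂volume.restrict (Set.Ioc (0 : ℝ) 1), ContinuousWithinAt f (Set.Ici r) r) :
    Tendsto (fun n : ℕ => (n : ℝ)⁻¹ * ∑ t ∈ Finset.Icc 1 n, f (t / n)) atTop
      (𝓝 (∫ r in Set.Ioc (0 : ℝ) 1, f r)) := by
  simp_rw [← setIntegral_riemannStep]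
  have hmem : ∀ᵐ r ∂volume.restrict (Set.Ioc (0 : ℝ) 1), r ∈ Set.Ioc (0 : ℝ) 1 :=
    ae_restrict_mem measurableSet_Ioc
  refine tendsto_integral_of_dominated_convergence (fun _ => C) (fun n => ?_)
    (integrable_const C) (fun n => ?_) ?_
  · exact (Finset.measurable_sum _ fun t _ =>
      measurable_const.indicator measurableSet_Ioc).aestronglyMeasurable
  · filter_upwards [hmem] with r hr
    rcases Nat.eq_zero_or_pos n with rfl | hn
    · simpa [riemannStep] using (abs_nonneg _).trans (hf 1 (by simp))
    rw [riemannStep_eq_of_mem_Ioc f hn hr, Real.norm_eq_abs]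
    exact hf _ (div_mem_Ioc_zero_one (ceil_mul_mem_Icc hn hr))
  · filter_upwards [hmem, hcont] with r hr hrc
    refine (hrc.tendsto.comp (tendsto_ceil_mul_div_nhdsWithin_Ici hr.1.le)).congr' ?_
    filter_upwards [eventually_gt_atTop 0] with n hn
    exact (riemannStep_eq_of_mem_Ioc f hn hr).symm

lemma PiecewiseLipschitzOn01.ae_continuousWithinAt_Ici {g : ℝ → ℝ}
    (hg : PiecewiseLipschitzOn01 g) :
    ∀ᵐ r ∂volume.restrict (Set.Ioc (0 : ℝ) 1), ContinuousWithinAt g (Set.Ici r) r := by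
  obtain ⟨q, I, K, hconn, -, hcover, hlip⟩ := hg
  -- Away from the finitely many right endpoints of the pieces, each point has room to its right
  -- inside its own piece, where `g` is Lipschitz.
  have hends : (⋃ l, {r : ℝ | IsGreatest (I l) r}).Finite :=
    Set.finite_iUnion fun l => Set.Subsingleton.finite fun _ ha _ hb => ha.unique hb
  filter_upwards [ae_restrict_mem measurableSet_Ioc,
    ae_restrict_of_ae (measure_eq_zero_iff_ae_notMem.1 (hends.measure_zero volume))]
    with r hr hr_end
  obtain ⟨l, hl⟩ := Set.mem_iUnion.1 (hcover ▸ hr : r ∈ ⋃ l, I l)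
  obtain ⟨s, hs, hrs⟩ : ∃ s ∈ I l, r < s := by
    by_contra! h
    exact hr_end (Set.mem_iUnion.2 ⟨l, hl, h⟩)
  exact (continuousWithinAt_Icc_iff_Ici hrs).1
    (((hlip l).continuousOn.mono ((hconn l).out hl hs)) r ⟨le_rfl, hrs.le⟩)

end RiemannSum

theorem stmt_3_general {Ω : Type*} [MeasurableSpace Ω] (μ : Measure Ω) [IsProbabilityMeasure μ]
    (g : ℝ → ℝ)
    (hgbdd : ∃ C : ℝ, ∀ r ∈ Set.Ioc (0 : ℝ) 1, |g r| ≤ C)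
    (hglip : PiecewiseLipschitzOn01 g)
    (ε : ℕ → Ω → ℝ) (hiid : IsIIDSeq μ ε 0)
    (hvar : ∫ ω, (ε 0 ω) ^ 2 ∂μ = 1)
    (hmom : ∃ s : ℝ, 8 < s ∧ Integrable (fun ω => |ε 0 ω| ^ s) μ) :
    TendstoZeroInProb μ (fun n ω =>
      (n : ℝ)⁻¹ * (∑ t ∈ Finset.Icc 1 n,
          ((g ((t : ℝ) / (n : ℝ)) * ε t ω) ^ 2 - g ((t : ℝ) / (n : ℝ)) ^ 2) ^ 2) -
        ((∫ ω', (ε 0 ω') ^ 4 ∂μ) - 1) * ∫ r in Set.Ioc (0 : ℝ) 1, g r ^ 4) := by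
  obtain ⟨C, hC⟩ := hgbdd
  obtain ⟨s, hs8, hs⟩ := hmom
  have hg4 : ∀ r ∈ Set.Ioc (0 : ℝ) 1, |g r ^ 4| ≤ C ^ 4 := fun r hr => by
    rw [abs_pow]; exact pow_le_pow_left₀ (abs_nonneg _) (hC r hr) 4
  set c := (∫ ω, ε 0 ω ^ 4 ∂μ) - 1
  set ψ : ℝ → ℝ := fun x => (x ^ 2 - 1) ^ 2 - c
  have hε0 : AEStronglyMeasurable (ε 0) μ := (hiid.1 0).aestronglyMeasurable
  have hsq := memLp_sq_sub_one_sq hε0 hs8.le hs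
  have hψmean : ∫ ω, ψ (ε 0 ω) ∂μ = 0 := by
    rw [integral_sub (hsq.integrable one_le_two) (integrable_const c),
      integral_sq_sub_one_sq (integrable_pow_of_integrable_abs_rpow hε0 hs (by norm_num; linarith))
        (integrable_pow_of_integrable_abs_rpow hε0 hs (by norm_num; linarith)) hvar]
    simp [c]
  have hweighted := (hiid.comp (φ := ψ) (by fun_prop)).tendstoZeroInProb_weighted_average
    (hsq.sub (memLp_const c)) hψmean (a := fun n t => g (t / n) ^ 4)
    fun n t ht => hg4 _ (div_mem_Ioc_zero_one ht)
  have hriemann := tendsto_riemannSum (f := fun r => g r ^ 4) hg4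
    (hglip.ae_continuousWithinAt_Ici.mono fun r hr => hr.pow 4)
  have hdet : Tendsto (fun n : ℕ => c * ((n : ℝ)⁻¹ * ∑ t ∈ Finset.Icc 1 n, g (t / n) ^ 4 -
      ∫ r in Set.Ioc (0 : ℝ) 1, g r ^ 4)) atTop (𝓝 0) := by
    have := (hriemann.sub_const (∫ r in Set.Ioc (0 : ℝ) 1, g r ^ 4)).const_mul c
    rwa [sub_self, mul_zero] at this
  convert hweighted.add_tendsto_zero hdet using 1
  funext n ω
  have hterm : ∀ t : ℕ, ((g (t / n) * ε t ω) ^ 2 - g (t / n) ^ 2) ^ 2 =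
      g (t / n) ^ 4 * ψ (ε t ω) + c * g (t / n) ^ 4 := fun t => by ring
  simp only [hterm, Finset.sum_add_distrib, ← Finset.mul_sum]
  ring

/-- Lemma 1, first part: LLN for the empirical variance of `u_t²`. -/
theorem stmt_3 {Ω : Type*} [MeasurableSpace Ω] (μ : Measure Ω) [IsProbabilityMeasure μ]
    (g : ℝ → ℝ) (hgpos : ∀ r ∈ Set.Ioc (0 : ℝ) 1, 0 < g r)
    (hgbdd : ∃ C : ℝ, ∀ r ∈ Set.Ioc (0 : ℝ) 1, |g r| ≤ C)
    (hglip : PiecewiseLipschitzOn01 g)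
    (ε : ℕ → Ω → ℝ) (hiid : IsIIDSeq μ ε 0)
    (hmean : ∫ ω, ε 0 ω ∂μ = 0) (hvar : ∫ ω, (ε 0 ω) ^ 2 ∂μ = 1)
    (hmom : ∃ s : ℝ, 8 < s ∧ Integrable (fun ω => |ε 0 ω| ^ s) μ) :
    TendstoZeroInProb μ (fun n ω =>
      (n : ℝ)⁻¹ * (∑ t ∈ Finset.Icc 1 n,
          ((g ((t : ℝ) / (n : ℝ)) * ε t ω) ^ 2 - g ((t : ℝ) / (n : ℝ)) ^ 2) ^ 2) -
        ((∫ ω', (ε 0 ω') ^ 4 ∂μ) - 1) * ∫ r in Set.Ioc (0 : ℝ) 1, g r ^ 4) :=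
  stmt_3_general μ g hgbdd hglip ε hiid hvar hmom

end
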